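/- arXiv:2207.03778 — 7 statements merged into one kernel-verified Lean document; each statement's English description precedes it below -/
import Mathlib

section
/- Let $E \subset \mathbb{R}^d$ be a connected set with cardinality greater than $1$. Let $F \subset \mathbb{R}^d$ be a compact set such that the complement $F^c = \mathbb{R}^d \setminus F$ has at least one bounded connected component. Then the arithmetic sum $E + F = \{x + y : x \in E, y \in F\}$ has non-empty interior. -/
/-! Let `U` be a bounded component of `Fᶜ` and `v = x₀ - x₁` with `x₀ ≠ x₁` in `E`. A continuous
linear functional `g` with `g v > 0` is bounded above on `U`, so on the open set `W` of points of
`U` where `g` is within `g v` of its supremum, translating by `v` leaves `U`. If some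
`p ∈ x₀ + W` missed `E + F`, the connected set `p - E` would avoid `F` and meet `U`, hence lie
in `U`, and so would contain `p - x₁ = (p - x₀) + v` with `p - x₀ ∈ W`, which is impossible. -/

open Pointwise

theorem sub_mem_connectedComponentIn_of_notMem_add {G : Type*} [TopologicalSpace G]
    [AddCommGroup G] [ContinuousSub G] {E F : Set G} (hE : IsPreconnected E) {p x₀ x₁ : G}
    (hp : p ∉ E + F) (hx₀ : x₀ ∈ E) (hx₁ : x₁ ∈ E) :
    p - x₁ ∈ connectedComponentIn Fᶜ (p - x₀) := by
  have hpE : (p - ·) '' E ⊆ Fᶜ := by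
    rintro _ ⟨y, hy, rfl⟩ hyF
    exact hp ⟨y, hy, p - y, hyF, add_sub_cancel y p⟩
  exact (hE.image _ (continuous_const.sub continuous_id).continuousOn).subset_connectedComponentIn
    ⟨x₀, hx₀, rfl⟩ hpE ⟨x₁, hx₁, rfl⟩

theorem exists_isOpen_subset_add_notMem_of_isBounded {V : Type*} [NormedAddCommGroup V]
    [NormedSpace ℝ V] {U : Set V} (hUo : IsOpen U) (hUb : Bornology.IsBounded U)
    (hUne : U.Nonempty) {v : V} (hv : v ≠ 0) :
    ∃ W ⊆ U, IsOpen W ∧ W.Nonempty ∧ ∀ q ∈ W, q + v ∉ U := by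
  obtain ⟨g, -, hgv⟩ := exists_dual_vector ℝ v (norm_ne_zero_iff.mpr hv)
  have hgv_pos : 0 < g v := by rw [hgv]; exact_mod_cast norm_pos_iff.mpr hv
  have hbdd : BddAbove (g '' U) := (g.lipschitz.isBounded_image hUb).bddAbove
  obtain ⟨_, ⟨u, huU, rfl⟩, hu⟩ :=
    exists_lt_of_lt_csSup (hUne.image g) (sub_lt_self (sSup (g '' U)) hgv_pos)
  refine ⟨U ∩ g ⁻¹' Set.Ioi (sSup (g '' U) - g v), Set.inter_subset_left,
    hUo.inter (isOpen_Ioi.preimage g.continuous), ⟨u, huU, hu⟩, ?_⟩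
  rintro q ⟨-, hq⟩ hqv
  have hle : g (q + v) ≤ sSup (g '' U) := le_csSup hbdd ⟨q + v, hqv, rfl⟩
  rw [map_add] at hle
  exact (sub_lt_iff_lt_add.mp hq).not_ge hle

/-- Let `E ⊂ ℝ^d` be a connected set with cardinality greater than 1, and `F ⊂ ℝ^d` a
compact set whose complement has at least one bounded connected component. Then the
arithmetic sum `E + F` has non-empty interior. -/
theorem sum_connected_compact_bounded_component_nonempty_interior
    (d : ℕ) (E F : Set (EuclideanSpace ℝ (Fin d)))
    (hEconn : IsConnected E) (hEcard : E.Nontrivial)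
    (hFcpt : IsCompact F)
    (hcomp : ∃ x ∈ Fᶜ, Bornology.IsBounded (connectedComponentIn Fᶜ x)) :
    (interior (E + F)).Nonempty := by
  obtain ⟨x, hxF, hUb⟩ := hcomp
  obtain ⟨x₀, hx₀, x₁, hx₁, hne⟩ := hEcard
  obtain ⟨W, hWU, hWo, hWne, hWv⟩ := exists_isOpen_subset_add_notMem_of_isBounded
    hFcpt.isClosed.isOpen_compl.connectedComponentIn hUb ⟨x, mem_connectedComponentIn hxF⟩
    (sub_ne_zero.mpr hne)
  refine (hWne.vadd_set (a := x₀)).mono (interior_maximal ?_ (hWo.vadd x₀))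
  rintro _ ⟨q, hqW, rfl⟩
  change x₀ + q ∈ E + F
  by_contra hp
  have hq₁ := sub_mem_connectedComponentIn_of_notMem_add hEconn.isPreconnected hp hx₀ hx₁
  rw [add_sub_cancel_left, ← connectedComponentIn_eq (hWU hqW), add_comm, add_sub_assoc] at hq₁
  exact hWv q hqW hq₁
end

section
/- Let $F, K \subset \mathbb{R}^d$ be compact sets such that $K$ is contained in a hyperplane (an affine subspace of codimension $1$) and the complement $(F \cup K)^c = \mathbb{R}^d \setminus (F \cup K)$ has at least one bounded connected component. Let $D$ be a dense subset of $\mathbb{R}^d$. Then the set $A := \bigcap_{z \in D} (z - F)^c$, where $z - F = \{z - y : y \in F\}$, is totally disconnected. -/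
open Set Metric Bornology

namespace PotLidAux

variable {E : Type*}

/-- Positions of pots in the recursive tree construction. -/
def potPos [AddCommGroup E] (pick : E → E) (z₀ : E) {ι : Type*} (δ : ι → E) : List ι → E
  | [] => z₀
  | j :: σ => pick (potPos pick z₀ δ σ + δ j)

/-- The closure of a connected component of a set, intersected with the set (open),
is contained in the component. -/
lemma closure_cci_inter_subset [TopologicalSpace E] [LocallyConnectedSpace E]
    {G : Set E} (hG : IsOpen G) {v : E} (hv : v ∈ G) :
    closure (connectedComponentIn G v) ∩ G ⊆ connectedComponentIn G v := by
  rintro p ⟨hpc, hpG⟩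
  obtain ⟨N, hNG, hNopen, hpN, hNconn⟩ :=
    (locallyConnectedSpace_iff_subsets_isOpen_isConnected.mp inferInstance) p G
      (hG.mem_nhds hpG)
  obtain ⟨q, hqN, hqV⟩ := _root_.mem_closure_iff.mp hpc N hNopen hpN
  have hunion : IsPreconnected (connectedComponentIn G v ∪ N) :=
    IsPreconnected.union q hqV hqN isPreconnected_connectedComponentIn
      hNconn.isPreconnected
  have hsub : connectedComponentIn G v ∪ N ⊆ G :=
    union_subset (connectedComponentIn_subset G v) hNG
  exact hunion.subset_connectedComponentIn (Or.inl (mem_connectedComponentIn hv)) hsub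
    (Or.inr hpN)

/-- A nonempty bounded set cannot be invariant under a nonzero translation. -/
lemma no_translate_subset [NormedAddCommGroup E] [NormedSpace ℝ E] {V : Set E}
    (hne : V.Nonempty) (hb : IsBounded V) {w : E} (hw : w ≠ 0)
    (h : ∀ v ∈ closure V, v - w ∈ closure V) : False := by
  obtain ⟨v₀, hv₀⟩ := hne
  have hiter : ∀ n : ℕ, v₀ - (n : ℝ) • w ∈ closure V := by
    intro n
    induction n with
    | zero => simpa using subset_closure hv₀
    | succ n ih =>
      have h1 := h _ ih
      have h2 : v₀ - ((n : ℝ) + 1) • w = v₀ - (n : ℝ) • w - w := by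
        rw [add_smul, one_smul, sub_sub]
      push_cast
      rw [h2]
      exact h1
  obtain ⟨R, hR⟩ := isBounded_iff_forall_norm_le.mp hb.closure
  have hwpos : (0 : ℝ) < ‖w‖ := norm_pos_iff.mpr hw
  obtain ⟨n, hn⟩ := exists_nat_gt ((R + ‖v₀‖) / ‖w‖)
  have h1 := hR _ (hiter n)
  have h2 : ‖(n : ℝ) • w‖ - ‖v₀‖ ≤ ‖v₀ - (n : ℝ) • w‖ := by
    have := norm_sub_norm_le ((n : ℝ) • w) v₀
    rw [← norm_sub_rev]
    linarith [this, norm_sub_rev ((n : ℝ) • w) v₀]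
  have h3 : ‖(n : ℝ) • w‖ = n * ‖w‖ := by
    rw [norm_smul, Real.norm_natCast]
  rw [div_lt_iff₀ hwpos] at hn
  rw [h3] at h2
  linarith

/-- A nonempty open set contains a point off any level set of a nonzero functional. -/
lemma exists_ne_level [NormedAddCommGroup E] [NormedSpace ℝ E] (φ : E →L[ℝ] ℝ)
    {v₀ : E} (hv₀ : φ v₀ ≠ 0) {O : Set E} (hO : IsOpen O) (hne : O.Nonempty) (c : ℝ) :
    ∃ q ∈ O, φ q ≠ c := by
  obtain ⟨p, hp⟩ := hne
  by_cases hpc : φ p = c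
  · obtain ⟨r, hr, hball⟩ := Metric.isOpen_iff.mp hO p hp
    have hv0 : v₀ ≠ 0 := fun h => hv₀ (by simp [h])
    have hnv : (0 : ℝ) < ‖v₀‖ := norm_pos_iff.mpr hv0
    refine ⟨p + (r / (2 * ‖v₀‖)) • v₀, hball ?_, ?_⟩
    · rw [mem_ball_iff_norm, add_sub_cancel_left, norm_smul]
      have : ‖r / (2 * ‖v₀‖)‖ * ‖v₀‖ = r / 2 := by
        rw [Real.norm_eq_abs, abs_of_pos (by positivity)]
        field_simp
      rw [this]
      linarith
    · rw [map_add, map_smul, hpc]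
      intro hcontra
      have h0 : (r / (2 * ‖v₀‖)) • φ v₀ = 0 := by linarith
      rw [smul_eq_mul] at h0
      exact hv₀ ((mul_eq_zero.mp h0).resolve_left (by positivity))
  · exact ⟨p, hp, hpc⟩



set_option maxHeartbeats 1000000 in
/-- Key lemma: along any preconnected subset of `A`, the functional `φ` cannot decrease
(hence by symmetry is constant). Proved by the "tree of pots" construction. -/
lemma tree_aux {d : ℕ} {F K U D t : Set (EuclideanSpace ℝ (Fin d))}
    (φ : EuclideanSpace ℝ (Fin d) →L[ℝ] ℝ) {c : ℝ}
    (hKc : ∀ p ∈ K, φ p = c) (hKcl : IsClosed K)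
    (hUo : IsOpen U) (hUb : IsBounded U)
    (hUcl : closure U \ U ⊆ F ∪ K)
    (hD : Dense D)
    (hAt : ∀ w ∈ t, ∀ z ∈ D, ∀ f ∈ F, z - f ≠ w)
    (ht : IsPreconnected t)
    (hside : ∃ u ∈ U, c < φ u)
    {x y : EuclideanSpace ℝ (Fin d)} (hx : x ∈ t) (hy : y ∈ t) : φ x ≤ φ y := by
  by_contra hlt
  push_neg at hlt
  obtain ⟨u₁, hu₁U, hu₁⟩ := hside
  set Δ : ℝ := φ x - φ y with hΔdef
  have hΔ : 0 < Δ := sub_pos.mpr hlt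
  set M : ℝ := ‖φ‖ with hMdef
  have hM0 : 0 ≤ M := norm_nonneg _
  have hLip : ∀ a b : EuclideanSpace ℝ (Fin d), |φ a - φ b| ≤ M * dist a b := by
    intro a b
    have h1 := φ.le_opNorm (a - b)
    rw [dist_eq_norm]
    calc |φ a - φ b| = ‖φ (a - b)‖ := by rw [map_sub]; rfl
      _ ≤ M * ‖a - b‖ := h1
  have hclcpt : IsCompact (closure U) :=
    isCompact_of_isClosed_isBounded isClosed_closure hUb.closure
  -- the sup of φ on the closure of U
  set S : ℝ := sSup (φ '' closure U) with hSdef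
  have hbdd : BddAbove (φ '' closure U) := (hclcpt.image φ.continuous).bddAbove
  have hub : ∀ w ∈ closure U, φ w ≤ S := fun w hw => le_csSup hbdd ⟨w, hw, rfl⟩
  have hSc : c < S := lt_of_lt_of_le hu₁ (hub _ (subset_closure hu₁U))
  -- pick u* near the top of U
  set η : ℝ := min (Δ / 4) (S - c) with hηdef
  have hη : 0 < η := lt_min (by linarith) (by linarith)
  obtain ⟨s, hsmem, hs⟩ := exists_lt_of_lt_csSup
    (Set.Nonempty.image φ ⟨u₁, subset_closure hu₁U⟩)
    (show S - η / 2 < S by linarith)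
  obtain ⟨wb, hwbcl, rfl⟩ := hsmem
  obtain ⟨us, husU, husd⟩ := Metric.mem_closure_iff.mp hwbcl (η / 2 / (M + 1)) (by positivity)
  have husφ : S - η < φ us := by
    have h1 := hLip wb us
    have h2 : M * dist wb us ≤ M * (η / 2 / (M + 1)) :=
      mul_le_mul_of_nonneg_left (le_of_lt husd) hM0
    have h3 : M * (η / 2 / (M + 1)) ≤ η / 2 := by
      have he : M * (η / 2 / (M + 1)) = M * (η / 2) / (M + 1) := by ring
      rw [he, div_le_iff₀ (show (0:ℝ) < M + 1 by linarith)]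
      nlinarith
    have h4 := abs_le.mp (le_trans h1 (le_trans h2 h3))
    linarith [h4.1, h4.2]
  have hcus : c < φ us := by
    have : η ≤ S - c := min_le_right _ _
    linarith
  have hSus : S - Δ / 4 ≤ φ us := by
    have : η ≤ Δ / 4 := min_le_left _ _
    linarith
  set γ : ℝ := φ us - c with hγdef
  have hγ0 : 0 < γ := by simp only [hγdef]; linarith
  -- ball around u* inside U
  obtain ⟨ρ₀, hρ₀, hballU⟩ := Metric.isOpen_iff.mp hUo us husU
  -- the "lid" part of the boundary of U
  set L : Set (EuclideanSpace ℝ (Fin d)) := (closure U \ U) ∩ K with hLdef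
  have hLcl : IsClosed L := (isClosed_closure.sdiff hUo).inter hKcl
  have hLb : IsBounded L := hUb.closure.subset (fun p hp => hp.1.1)
  have hLcpt : IsCompact L := isCompact_of_isClosed_isBounded hLcl hLb
  -- finite cover of the lid by balls
  obtain ⟨T, hTL, hTcov⟩ := hLcpt.elim_nhds_subcover (fun p => ball p (ρ₀ / 2))
    (fun p _ => ball_mem_nhds p (by positivity))
  set ι := {p : EuclideanSpace ℝ (Fin d) // p ∈ T} with hιdef
  set δ : ι → EuclideanSpace ℝ (Fin d) := fun j => us - j.val with hδdef
  have hδφ : ∀ j : ι, φ (δ j) = γ := by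
    intro j
    have hjL : j.val ∈ L := hTL j.val j.prop
    have hjc : φ j.val = c := hKc _ hjL.2
    simp only [hδdef, map_sub, hjc, hγdef]
  have hball2 : ∀ (j : ι) (w : EuclideanSpace ℝ (Fin d)), dist w j.val < ρ₀ → w + δ j ∈ U := by
    intro j w hw
    apply hballU
    have heq : w + δ j - us = w - j.val := by simp only [hδdef]; abel
    rw [mem_ball, dist_eq_norm, heq, ← dist_eq_norm]
    exact hw
  -- the perturbation radius
  set ρ' : ℝ := min (ρ₀ / 2) (min (Δ / 4) (γ / 2) / (M + 1)) with hρ'def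
  have hρ' : 0 < ρ' := by
    apply lt_min (by positivity)
    apply div_pos (lt_min (by linarith) (by linarith)) (by linarith)
  have hρ'ρ₀2 : ρ' ≤ ρ₀ / 2 := min_le_left _ _
  have hρ'ρ₀ : ρ' ≤ ρ₀ := le_trans hρ'ρ₀2 (by linarith)
  have hMρ' : M * ρ' ≤ min (Δ / 4) (γ / 2) := by
    calc M * ρ' ≤ M * (min (Δ / 4) (γ / 2) / (M + 1)) :=
          mul_le_mul_of_nonneg_left (min_le_right _ _) hM0
      _ ≤ (M + 1) * (min (Δ / 4) (γ / 2) / (M + 1)) := by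
          apply mul_le_mul_of_nonneg_right (by linarith)
          positivity
      _ = min (Δ / 4) (γ / 2) := by field_simp
  have hMρΔ : M * ρ' ≤ Δ / 4 := le_trans hMρ' (min_le_left _ _)
  have hMργ : M * ρ' ≤ γ / 2 := le_trans hMρ' (min_le_right _ _)
  -- the pick function
  have hpick : ∀ w : EuclideanSpace ℝ (Fin d), ∃ z, z ∈ D ∧ z ∈ ball w ρ' := by
    intro w
    obtain ⟨z, hzD, hzb⟩ := hD.exists_mem_open isOpen_ball ⟨w, mem_ball_self hρ'⟩
    exact ⟨z, hzD, hzb⟩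
  choose pick hpickD hpickB using hpick
  have hφpick : ∀ w : EuclideanSpace ℝ (Fin d), φ w - M * ρ' ≤ φ (pick w) := by
    intro w
    have h1 := hLip (pick w) w
    have h2 : M * dist (pick w) w ≤ M * ρ' := by
      apply mul_le_mul_of_nonneg_left _ hM0
      exact le_of_lt (mem_ball.mp (hpickB w))
    have h3 := abs_le.mp (le_trans h1 h2)
    linarith [h3.1, h3.2]
  set z₀ : EuclideanSpace ℝ (Fin d) := pick (x + us) with hz₀def
  set Z : List ι → EuclideanSpace ℝ (Fin d) := potPos pick z₀ δ with hZdef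
  have hZnil : Z [] = z₀ := rfl
  have hZcons : ∀ (j : ι) (σ : List ι), Z (j :: σ) = pick (Z σ + δ j) := fun j σ => rfl
  have hZD : ∀ σ : List ι, Z σ ∈ D := by
    intro σ
    induction σ with
    | nil => exact hpickD (x + us)
    | cons j σ ih => exact hpickD (Z σ + δ j)
  have hZφ : ∀ σ : List ι, φ z₀ + σ.length * (γ / 2) ≤ φ (Z σ) := by
    intro σ
    induction σ with
    | nil => simp [hZnil]
    | cons j σ ih =>
      have h1 : φ (Z σ + δ j) = φ (Z σ) + γ := by rw [map_add, hδφ]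
      have h2 := hφpick (Z σ + δ j)
      rw [hZcons j σ]
      have hlen : ((j :: σ).length : ℝ) = (σ.length : ℝ) + 1 := by
        simp [List.length_cons]
      rw [hlen]
      have : φ (Z σ) + γ - M * ρ' ≤ φ (pick (Z σ + δ j)) := by rw [← h1]; exact h2
      nlinarith
  set pot : List ι → Set (EuclideanSpace ℝ (Fin d)) :=
    fun σ => (fun w => Z σ - w) ⁻¹' U with hpotdef
  set W : Set (EuclideanSpace ℝ (Fin d)) := ⋃ σ, pot σ with hWdef
  have hpotopen : ∀ σ, IsOpen (pot σ) :=
    fun σ => hUo.preimage (continuous_const.sub continuous_id)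
  have hWopen : IsOpen W := isOpen_iUnion hpotopen
  have hz₀x : z₀ - x ∈ U := by
    apply hballU
    have heq : dist (z₀ - x) us = dist z₀ (x + us) := by
      rw [dist_eq_norm, dist_eq_norm]; congr 1; abel
    rw [mem_ball, heq]
    exact lt_of_lt_of_le (mem_ball.mp (hpickB (x + us))) hρ'ρ₀
  have hxW : x ∈ W := mem_iUnion.mpr ⟨[], hz₀x⟩
  have hz₀φ : φ x + φ us - Δ / 4 ≤ φ z₀ := by
    have h1 := hφpick (x + us)
    rw [map_add] at h1
    linarith
  have hWfloor : ∀ w ∈ W, φ y + Δ / 2 ≤ φ w := by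
    intro w hw
    obtain ⟨σ, hσ⟩ := mem_iUnion.mp hw
    have h1 : φ (Z σ - w) ≤ S := hub _ (subset_closure hσ)
    rw [map_sub] at h1
    have h3 : φ z₀ ≤ φ (Z σ) := by
      have h4 := hZφ σ
      have h5 : (0:ℝ) ≤ (σ.length : ℝ) * (γ / 2) := by positivity
      linarith
    have h6 : Δ = φ x - φ y := hΔdef
    linarith
  have hyW : y ∉ closure W := by
    intro hyc
    have hsub : closure W ⊆ {w : EuclideanSpace ℝ (Fin d) | φ y + Δ / 2 ≤ φ w} :=
      closure_minimal (fun w hw => hWfloor w hw) (isClosed_le continuous_const φ.continuous)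
    have := hsub hyc
    simp only [mem_setOf_eq] at this
    linarith
  -- the crucial clopen-ness
  have hclopen : ∀ w' ∈ t, w' ∈ closure W → w' ∈ W := by
    intro w' hw't hw'cl
    by_contra hw'W
    set X : Set (EuclideanSpace ℝ (Fin d)) := {w | φ w < φ w' + 1} with hXdef
    have hXopen : IsOpen X := isOpen_lt φ.continuous continuous_const
    have hw'X : w' ∈ X := by simp [hXdef]
    have step1 : w' ∈ closure (X ∩ W) := hXopen.inter_closure ⟨hw'X, hw'cl⟩
    obtain ⟨N, hN⟩ := exists_nat_gt ((φ w' + 1 + S - φ z₀) / (γ / 2))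
    have hNbig : φ w' + 1 + S - φ z₀ < N * (γ / 2) := by
      rw [div_lt_iff₀ (show (0:ℝ) < γ / 2 by linarith)] at hN
      linarith
    have hXW : X ∩ W ⊆ ⋃ σ ∈ {σ : List ι | σ.length ≤ N}, pot σ := by
      rintro w ⟨hwX, hwW⟩
      obtain ⟨σ, hσ⟩ := mem_iUnion.mp hwW
      refine mem_biUnion ?_ hσ
      by_contra hlen
      simp only [mem_setOf_eq, not_le] at hlen
      have h1 : φ (Z σ - w) ≤ S := hub _ (subset_closure hσ)
      rw [map_sub] at h1
      have h2 := hZφ σ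
      have h3 : (N : ℝ) ≤ (σ.length : ℝ) := by exact_mod_cast le_of_lt hlen
      have h4 : (N : ℝ) * (γ / 2) ≤ (σ.length : ℝ) * (γ / 2) :=
        mul_le_mul_of_nonneg_right h3 (by linarith)
      have h5 : φ w < φ w' + 1 := hwX
      linarith
    have step2 : w' ∈ closure (⋃ σ ∈ {σ : List ι | σ.length ≤ N}, pot σ) :=
      closure_mono hXW step1
    have hfin : {σ : List ι | σ.length ≤ N}.Finite := List.finite_length_le ι N
    rw [hfin.closure_biUnion] at step2
    obtain ⟨σ, hσN, hσcl⟩ := mem_iUnion₂.mp step2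
    have hq : Z σ - w' ∈ closure U := by
      have hcont : Continuous (fun w : EuclideanSpace ℝ (Fin d) => Z σ - w) :=
        continuous_const.sub continuous_id
      exact hcont.closure_preimage_subset U hσcl
    have hqU : Z σ - w' ∉ U := fun h => hw'W (mem_iUnion.mpr ⟨σ, h⟩)
    rcases hUcl ⟨hq, hqU⟩ with hqF | hqK
    · exact hAt w' hw't (Z σ) (hZD σ) _ hqF (sub_sub_cancel _ _)
    · have hqL : Z σ - w' ∈ L := ⟨⟨hq, hqU⟩, hqK⟩
      obtain ⟨p, hpT, hpb⟩ := mem_iUnion₂.mp (hTcov hqL)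
      set j : ι := ⟨p, hpT⟩ with hjdef
      have hchild : Z (j :: σ) - w' ∈ U := by
        rw [hZcons j σ]
        have hdist : dist ((Z σ - w') + (pick (Z σ + δ j) - (Z σ + δ j))) j.val < ρ₀ := by
          have he : dist (pick (Z σ + δ j)) (Z σ + δ j) < ρ' := mem_ball.mp (hpickB _)
          calc dist ((Z σ - w') + (pick (Z σ + δ j) - (Z σ + δ j))) j.val
              ≤ dist ((Z σ - w') + (pick (Z σ + δ j) - (Z σ + δ j))) (Z σ - w')
                + dist (Z σ - w') j.val := dist_triangle _ _ _
            _ < ρ' + ρ₀ / 2 := by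
                apply add_lt_add_of_le_of_lt
                · rw [dist_eq_norm]
                  have : (Z σ - w') + (pick (Z σ + δ j) - (Z σ + δ j)) - (Z σ - w')
                      = pick (Z σ + δ j) - (Z σ + δ j) := by abel
                  rw [this, ← dist_eq_norm]
                  exact le_of_lt he
                · exact mem_ball.mp hpb
            _ ≤ ρ₀ := by linarith
        have key := hball2 j _ hdist
        have heq2 : (Z σ - w') + (pick (Z σ + δ j) - (Z σ + δ j)) + δ j
            = pick (Z σ + δ j) - w' := by abel
        rwa [heq2] at key
      exact hw'W (mem_iUnion.mpr ⟨j :: σ, hchild⟩)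
  -- conclude by preconnectedness
  have hcover : t ⊆ W ∪ (closure W)ᶜ := by
    intro w' hw'
    by_cases h : w' ∈ closure W
    · exact Or.inl (hclopen w' hw' h)
    · exact Or.inr h
  obtain ⟨w, _, hwW, hwc⟩ := ht W (closure W)ᶜ hWopen isClosed_closure.isOpen_compl
    hcover ⟨x, hx, hxW⟩ ⟨y, hy, hyW⟩
  exact hwc (subset_closure hwW)


/-- Separation lemma for the case where `φ` is constant on `t`. -/
lemma const_aux {d : ℕ} {F V D t : Set (EuclideanSpace ℝ (Fin d))}
    (φ : EuclideanSpace ℝ (Fin d) →L[ℝ] ℝ) {c τ : ℝ}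
    {v₀ : EuclideanSpace ℝ (Fin d)} (hv₀ : φ v₀ ≠ 0)
    (hVo : IsOpen V) (hVne : V.Nonempty) (hVb : IsBounded V)
    (hVcl : closure V \ V ⊆ F ∪ {w | φ w = c})
    (hD : Dense D)
    (hAt : ∀ w ∈ t, ∀ z ∈ D, ∀ f ∈ F, z - f ≠ w)
    (ht : IsPreconnected t)
    (hconst : ∀ w ∈ t, φ w = τ)
    {a b : EuclideanSpace ℝ (Fin d)} (ha : a ∈ t) (hb : b ∈ t) : a = b := by
  by_contra hab
  -- there is a point in (a + V) \ (b + closure V)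
  have hOne : ∃ q : EuclideanSpace ℝ (Fin d), q - a ∈ V ∧ q - b ∉ closure V := by
    by_contra hempty
    push_neg at hempty
    have hstep : ∀ v ∈ closure V, v - (b - a) ∈ closure V := by
      have hcl : IsClosed {s : EuclideanSpace ℝ (Fin d) | s - (b - a) ∈ closure V} :=
        IsClosed.preimage (continuous_id.sub continuous_const) isClosed_closure
      have hsub : V ⊆ {s : EuclideanSpace ℝ (Fin d) | s - (b - a) ∈ closure V} := by
        intro v hv
        have h1 := hempty (a + v) (by simpa using hv)
        simp only [mem_setOf_eq]
        have heq : a + v - b = v - (b - a) := by abel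
        rwa [heq] at h1
      exact fun v hv => closure_minimal hsub hcl hv
    exact no_translate_subset hVne hVb (sub_ne_zero.mpr (Ne.symm hab)) hstep
  obtain ⟨q, hqa, hqb⟩ := hOne
  set O : Set (EuclideanSpace ℝ (Fin d)) :=
    {w | w - a ∈ V ∧ w - b ∉ closure V} with hOdef
  have hOopen : IsOpen O := by
    apply IsOpen.inter
    · exact hVo.preimage (continuous_id.sub continuous_const)
    · exact (IsClosed.preimage (continuous_id.sub continuous_const) isClosed_closure).isOpen_compl
  obtain ⟨q', hq'O, hq'c⟩ := exists_ne_level φ hv₀ hOopen ⟨q, hqa, hqb⟩ (τ + c)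
  have hO2 : IsOpen (O ∩ {w : EuclideanSpace ℝ (Fin d) | φ w ≠ τ + c}) :=
    hOopen.inter ((isClosed_eq φ.continuous continuous_const).isOpen_compl)
  obtain ⟨z, hzD, hzO, hzφ⟩ := hD.exists_mem_open hO2 ⟨q', hq'O, hq'c⟩
  obtain ⟨hzaV, hzbV⟩ := hzO
  -- separation
  have hu : IsOpen {w : EuclideanSpace ℝ (Fin d) | z - w ∈ V} :=
    hVo.preimage (continuous_const.sub continuous_id)
  have hv : IsOpen {w : EuclideanSpace ℝ (Fin d) | z - w ∉ closure V} :=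
    (IsClosed.preimage (continuous_const.sub continuous_id) isClosed_closure).isOpen_compl
  have hcover : t ⊆ {w | z - w ∈ V} ∪ {w | z - w ∉ closure V} := by
    intro w hw
    by_cases h1 : z - w ∈ V
    · exact Or.inl h1
    by_cases h2 : z - w ∈ closure V
    · exfalso
      rcases hVcl ⟨h2, h1⟩ with hF | hH
      · exact hAt w hw z hzD _ hF (sub_sub_cancel _ _)
      · have h3 : φ (z - w) = c := hH
        rw [map_sub] at h3
        have h4 : φ w = τ := hconst w hw
        exact hzφ (by linarith)
    · exact Or.inr h2
  have haz : z - a ∈ V := by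
    have heq : z - a = z - a := rfl
    exact hzaV
  have hbz : z - b ∉ closure V := hzbV
  obtain ⟨w, _, hw1, hw2⟩ := ht {w | z - w ∈ V} {w | z - w ∉ closure V} hu hv hcover
    ⟨a, ha, haz⟩ ⟨b, hb, hbz⟩
  exact hw2 (subset_closure hw1)

end PotLidAux

open PotLidAux in
/-- Let `F, K ⊂ ℝ^d` be compact sets such that `K` is contained in a hyperplane and
`(F ∪ K)ᶜ` has at least one bounded connected component. Let `D` be a dense subset of
`ℝ^d`. Then the set `A = ⋂_{z ∈ D} (z - F)ᶜ` is totally disconnected. -/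
theorem inter_compl_translates_totallyDisconnected
    (d : ℕ) (F K : Set (EuclideanSpace ℝ (Fin d)))
    (hFcpt : IsCompact F) (hKcpt : IsCompact K)
    (hKplane : ∃ (φ : EuclideanSpace ℝ (Fin d) →ₗ[ℝ] ℝ) (c : ℝ),
      φ ≠ 0 ∧ ∀ x ∈ K, φ x = c)
    (hcomp : ∃ x ∈ (F ∪ K)ᶜ, Bornology.IsBounded (connectedComponentIn (F ∪ K)ᶜ x))
    (D : Set (EuclideanSpace ℝ (Fin d))) (hD : Dense D) :
    IsTotallyDisconnected (⋂ z ∈ D, ((fun y => z - y) '' F)ᶜ) := by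
  obtain ⟨φl, c, hφ0, hKc0⟩ := hKplane
  obtain ⟨xh, hxh, hUb⟩ := hcomp
  intro t hts ht
  set φ : EuclideanSpace ℝ (Fin d) →L[ℝ] ℝ := LinearMap.toContinuousLinearMap φl with hφdef
  have hKc : ∀ p ∈ K, φ p = c := fun p hp => hKc0 p hp
  have hGopen : IsOpen (F ∪ K)ᶜ := (hFcpt.isClosed.union hKcpt.isClosed).isOpen_compl
  set U := connectedComponentIn (F ∪ K)ᶜ xh with hUdef
  have hUo : IsOpen U := hGopen.connectedComponentIn
  have hUsub : U ⊆ (F ∪ K)ᶜ := connectedComponentIn_subset _ _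
  have hUcl : closure U \ U ⊆ F ∪ K := by
    intro p hp
    by_contra hpFK
    exact hp.2 (closure_cci_inter_subset hGopen hxh ⟨hp.1, hpFK⟩)
  have hAt : ∀ w ∈ t, ∀ z ∈ D, ∀ f ∈ F, z - f ≠ w := by
    intro w hw z hz f hf heq
    have h1 := hts hw
    rw [Set.mem_iInter₂] at h1
    exact h1 z hz ⟨f, hf, heq⟩
  obtain ⟨v₀, hv₀0⟩ := DFunLike.ne_iff.mp hφ0
  have hv₀ : φ v₀ ≠ 0 := hv₀0
  have hUne : U.Nonempty := ⟨xh, mem_connectedComponentIn hxh⟩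
  obtain ⟨u₁, hu₁U, hu₁c⟩ := exists_ne_level φ hv₀ hUo hUne c
  -- φ is constant on t
  have hconst : ∀ w ∈ t, ∀ w' ∈ t, φ w = φ w' := by
    rcases lt_or_gt_of_ne hu₁c with hltc | hgtc
    · intro w hw w' hw'
      have hKc' : ∀ p ∈ K, (-φ) p = -c := fun p hp => by
        simp [hKc p hp]
      have hside : ∃ u ∈ U, -c < (-φ) u := ⟨u₁, hu₁U, by simpa using hltc⟩
      have h1 := tree_aux (-φ) hKc' hKcpt.isClosed hUo hUb hUcl hD hAt ht hside hw hw'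
      have h2 := tree_aux (-φ) hKc' hKcpt.isClosed hUo hUb hUcl hD hAt ht hside hw' hw
      simp only [ContinuousLinearMap.neg_apply, neg_le_neg_iff] at h1 h2
      linarith
    · intro w hw w' hw'
      have hside : ∃ u ∈ U, c < φ u := ⟨u₁, hu₁U, hgtc⟩
      have h1 := tree_aux φ hKc hKcpt.isClosed hUo hUb hUcl hD hAt ht hside hw hw'
      have h2 := tree_aux φ hKc hKcpt.isClosed hUo hUb hUcl hD hAt ht hside hw' hw
      linarith
  -- now the constant case
  intro a ha b hb
  set Hs : Set (EuclideanSpace ℝ (Fin d)) := {w | φ w = c} with hHsdef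
  have hHscl : IsClosed Hs := isClosed_eq φ.continuous continuous_const
  have hG' : IsOpen (F ∪ Hs)ᶜ := (hFcpt.isClosed.union hHscl).isOpen_compl
  have hu₁G' : u₁ ∈ (F ∪ Hs)ᶜ := by
    intro hmem
    rcases hmem with hF | hH
    · exact hUsub hu₁U (Or.inl hF)
    · exact hu₁c hH
  set V := connectedComponentIn (F ∪ Hs)ᶜ u₁ with hVdef
  have hVo : IsOpen V := hG'.connectedComponentIn
  have hVne : V.Nonempty := ⟨u₁, mem_connectedComponentIn hu₁G'⟩
  have hVU : V ⊆ U := by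
    have hsub1 : (F ∪ Hs)ᶜ ⊆ (F ∪ K)ᶜ := by
      apply compl_subset_compl.mpr
      apply union_subset_union_right
      exact fun p hp => hKc p hp
    have h1 : V ⊆ connectedComponentIn (F ∪ K)ᶜ u₁ :=
      isPreconnected_connectedComponentIn.subset_connectedComponentIn
        (mem_connectedComponentIn hu₁G')
        ((connectedComponentIn_subset _ _).trans hsub1)
    rwa [← connectedComponentIn_eq hu₁U] at h1
  have hVb : IsBounded V := hUb.subset hVU
  have hVcl : closure V \ V ⊆ F ∪ Hs := by
    intro p hp
    by_contra hpFH
    exact hp.2 (closure_cci_inter_subset hG' hu₁G' ⟨hp.1, hpFH⟩)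
  exact const_aux φ hv₀ hVo hVne hVb hVcl hD hAt ht
    (fun w hw => hconst w hw a ha) ha hb
end

section
/- Let $S$ be a compact subset of $\mathbb{R}^2$, and suppose $x \in \partial(\mathrm{conv}(S)) \setminus S$, where $\mathrm{conv}(S)$ is the convex hull of $S$ and $\partial$ denotes the topological boundary. Then there exist $u, v \in S$ with $u \neq v$ such that $x$ is contained in the line segment connecting $u$ and $v$, and moreover $S$ lies completely on one side of the line passing through $u$ and $v$; that is, there is a closed half-plane bounded by the affine line through $u$ and $v$ that contains $S$. -/
/-! A supporting line `φ = φ x` of the (compact) convex hull at `x` meets `S` in a set whose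
hull still contains `x`: in a Carathéodory representation of `x` with positive weights every point
must lie on that line. Affinely independent points on a line number at most two, and since `x ∉ S`
there are exactly two, `u` and `v`. -/

open Set Function Module

section ConvexHull

variable {R E : Type*} [Field R] [LinearOrder R] [IsStrictOrderedRing R]
  [AddCommGroup E] [Module R E]

theorem convexHull_range_eq_image_stdSimplex {ι : Type*} [Fintype ι] (v : ι → E) :
    convexHull R (range v) = (fun w : ι → R => ∑ i, w i • v i) '' stdSimplex R ι := by
  classical
  have hL : (fun w : ι → R => ∑ i, w i • v i) = Fintype.linearCombination R v := by
    ext w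
    simp [Fintype.linearCombination_apply]
  rw [← convexHull_basis_eq_stdSimplex, hL, LinearMap.image_convexHull, ← range_comp]
  congr 2
  ext i
  simp [Fintype.linearCombination_apply]

theorem mem_convexHull_sep_eq_of_forall_le {s : Set E} {x : E} (hx : x ∈ convexHull R s)
    {f : E →ₗ[R] R} (hf : ∀ y ∈ s, f y ≤ f x) : x ∈ convexHull R {y ∈ s | f y = f x} := by
  obtain ⟨ι, _, z, w, hzs, -, hw0, hw1, rfl⟩ := eq_pos_convex_span_of_mem_convexHull hx
  set x := ∑ i, w i • z i
  have hle : ∀ i ∈ Finset.univ, w i * f (z i) ≤ w i * f x := fun i _ =>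
    mul_le_mul_of_nonneg_left (hf _ (hzs ⟨i, rfl⟩)) (hw0 i).le
  have hsum : ∑ i, w i * f (z i) = ∑ i, w i * f x := by
    simp [x, ← Finset.sum_mul, hw1]
  have heq : ∀ i, f (z i) = f x := fun i =>
    mul_left_cancel₀ (hw0 i).ne' ((Finset.sum_eq_sum_iff_of_le hle).1 hsum i (Finset.mem_univ i))
  exact mem_convexHull_of_exists_fintype w z (fun i => (hw0 i).le) hw1
    (fun i => ⟨hzs ⟨i, rfl⟩, heq i⟩) rfl

theorem Finset.exists_ne_mem_segment_of_mem_convexHull {t : Finset E} (ht : t.card ≤ 2) {x : E}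
    (hx : x ∈ convexHull R (t : Set E)) (hxt : x ∉ t) :
    ∃ u ∈ t, ∃ v ∈ t, u ≠ v ∧ x ∈ segment R u v := by
  classical
  obtain h | h | h : t.card = 0 ∨ t.card = 1 ∨ t.card = 2 := by omega
  · simp [Finset.card_eq_zero.1 h] at hx
  · obtain ⟨a, rfl⟩ := Finset.card_eq_one.1 h
    simp_all
  · obtain ⟨a, b, hab, rfl⟩ := Finset.card_eq_two.1 h
    rw [Finset.coe_pair, convexHull_pair] at hx
    exact ⟨a, by simp, b, by simp, hab, hx⟩

end ConvexHull

theorem AffineIndependent.card_le_finrank_of_apply_eq {k V : Type*} [Field k] [AddCommGroup V]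
    [Module k V] [FiniteDimensional k V] {ι : Type*} [Fintype ι] {p : ι → V}
    (hp : AffineIndependent k p) {f : V →ₗ[k] k} (hf : f ≠ 0) {c : k} (hc : ∀ i, f (p i) = c) :
    Fintype.card ι ≤ finrank k V := by
  have hspan : vectorSpan k (range p) ≤ LinearMap.ker f := by
    rw [vectorSpan_def, Submodule.span_le]
    rintro _ ⟨_, ⟨i, rfl⟩, _, ⟨j, rfl⟩, rfl⟩
    simp [hc]
  have hker : finrank k (LinearMap.ker f) < finrank k V :=
    Submodule.finrank_lt fun h => hf (LinearMap.ker_eq_top.1 h)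
  have := hp.card_le_finrank_succ.trans (Nat.add_le_add_right (Submodule.finrank_mono hspan) 1)
  omega

section Topology

variable {E : Type*} [AddCommGroup E] [Module ℝ E] [TopologicalSpace E] [IsTopologicalAddGroup E]
  [ContinuousSMul ℝ E] [FiniteDimensional ℝ E]

theorem isCompact_convexHull {s : Set E} (hs : IsCompact s) : IsCompact (convexHull ℝ s) := by
  classical
  let n := finrank ℝ E + 1
  have key : convexHull ℝ s = (fun p : (Fin n → ℝ) × (Fin n → E) => ∑ i, p.1 i • p.2 i) ''
      (stdSimplex ℝ (Fin n) ×ˢ univ.pi fun _ => s) := by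
    refine subset_antisymm (fun x hx => ?_) ?_
    · rw [convexHull_eq_union] at hx
      simp only [mem_iUnion] at hx
      obtain ⟨t, hts, hti, hxt⟩ := hx
      obtain ⟨e⟩ : Nonempty (t ↪ Fin n) :=
        Function.Embedding.nonempty_of_card_le (by
          simpa [n] using hti.card_le_finrank_succ.trans
            (Nat.add_le_add_right (Submodule.finrank_le (R := ℝ) _) 1))
      have : Nonempty t := (convexHull_nonempty_iff.1 ⟨x, hxt⟩).to_subtype
      -- `invFun e` enumerates `t` with repetitions, padding it to `n` points
      have hrange : range (Subtype.val ∘ invFun e) = (t : Set E) := by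
        rw [range_comp, (invFun_surjective e.injective).range_eq, image_univ, Subtype.range_coe]
      rw [← hrange, convexHull_range_eq_image_stdSimplex] at hxt
      obtain ⟨w, hw, rfl⟩ := hxt
      exact ⟨(w, Subtype.val ∘ invFun e), ⟨hw, fun i _ => hts (invFun e i).2⟩, rfl⟩
    · rintro _ ⟨⟨w, z⟩, ⟨hw, hz⟩, rfl⟩
      refine convexHull_mono (range_subset_iff.2 fun i => hz i (mem_univ i)) ?_
      rw [convexHull_range_eq_image_stdSimplex (R := ℝ)]
      exact ⟨w, hw, rfl⟩
  rw [key]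
  exact ((isCompact_stdSimplex ℝ _).prod (isCompact_univ_pi fun _ => hs)).image (by fun_prop)

end Topology

theorem Convex.exists_ne_zero_le_of_notMem_interior {E : Type*} [NormedAddCommGroup E]
    [NormedSpace ℝ E] [FiniteDimensional ℝ E] {C : Set E} (hC : Convex ℝ C) {x : E} (hxC : x ∈ C)
    (hx : x ∉ interior C) : ∃ f : E →ₗ[ℝ] ℝ, f ≠ 0 ∧ ∀ y ∈ C, f y ≤ f x := by
  by_cases hint : (interior C).Nonempty
  · obtain ⟨f, hf, hle⟩ := geometric_hahn_banach_of_nonempty_interior_point hC hx hint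
    exact ⟨f, fun h => hf (ContinuousLinearMap.coe_injective h), hle⟩
  · have hspan : vectorSpan ℝ C < ⊤ := by
      refine lt_top_iff_ne_top.2 fun h => hint (hC.interior_nonempty_iff_affineSpan_eq_top.2 ?_)
      exact (AffineSubspace.affineSpan_eq_top_iff_vectorSpan_eq_top_of_nonempty ℝ E E ⟨x, hxC⟩).2 h
    obtain ⟨f, hf, hker⟩ := Submodule.exists_le_ker_of_lt_top _ hspan
    refine ⟨f, hf, fun y hy => le_of_eq ?_⟩
    simpa [sub_eq_zero] using hker (vsub_mem_vectorSpan ℝ hy hxC)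

/-- Let `S` be a compact subset of `ℝ²` and `x ∈ ∂(conv S) \ S`. Then there exist
`u, v ∈ S` with `u ≠ v` such that `x` lies on the segment joining `u` and `v`, and `S`
lies completely on one side of the line through `u` and `v`: there is a nonzero linear
functional `φ` with `φ u = φ v` and `φ s ≤ φ u` for all `s ∈ S`. -/
theorem boundary_convexHull_point_on_supporting_segment
    (S : Set (EuclideanSpace ℝ (Fin 2))) (hS : IsCompact S)
    (x : EuclideanSpace ℝ (Fin 2))
    (hx : x ∈ frontier (convexHull ℝ S) \ S) :
    ∃ u ∈ S, ∃ v ∈ S, u ≠ v ∧ x ∈ segment ℝ u v ∧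
      ∃ φ : EuclideanSpace ℝ (Fin 2) →ₗ[ℝ] ℝ, φ ≠ 0 ∧ φ u = φ v ∧ ∀ s ∈ S, φ s ≤ φ u := by
  obtain ⟨hxf, hxS⟩ := hx
  have hxK : x ∈ convexHull ℝ S := (isCompact_convexHull hS).isClosed.frontier_subset hxf
  obtain ⟨φ, hφ, hφx⟩ := (convex_convexHull ℝ S).exists_ne_zero_le_of_notMem_interior hxK hxf.2
  have hφS : ∀ s ∈ S, φ s ≤ φ x := fun s hs => hφx s (subset_convexHull ℝ S hs)
  have hxT := mem_convexHull_sep_eq_of_forall_le hxK hφS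
  rw [convexHull_eq_union] at hxT
  simp only [mem_iUnion] at hxT
  obtain ⟨t, htT, hti, hxt⟩ := hxT
  have hcard : t.card ≤ 2 := by
    simpa using hti.card_le_finrank_of_apply_eq hφ (c := φ x) fun i => (htT i.2).2
  obtain ⟨u, hu, v, hv, huv, hxuv⟩ :=
    Finset.exists_ne_mem_segment_of_mem_convexHull hcard hxt fun h => hxS (htT h).1
  refine ⟨u, (htT hu).1, v, (htT hv).1, huv, hxuv, φ, hφ, (htT hu).2.trans (htT hv).2.symm,
    fun s hs => (htT hu).2 ▸ hφS s hs⟩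
end

section
/- Let $f : \mathbb{R} \to \mathbb{R}$ be a function, and let $G_f = \{(x, f(x)) : x \in \mathbb{R}\} \subset \mathbb{R}^2$ be its graph. Then there exists a vertical line segment $L \subset \mathbb{R}^2$ (a set of the form $\{p\} \times [c, c+\ell]$ with $\ell > 0$) such that $G_f + L$ has empty interior if and only if $f$ is uniformly oscillated, i.e., $\inf_{x \in \mathbb{R}} \omega_f(x) > 0$, where $\omega_f(x) = \lim_{\delta \to 0^+} \left[\sup_{y \in [x-\delta, x+\delta]} f(y) - \inf_{y \in [x-\delta, x+\delta]} f(y)\right]$ is the oscillation of $f$ at $x$ (taking values in $[0, \infty]$). -/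
/-!
Translating the graph by the vertical segment `{p} × [c, c + ℓ]` gives the set of points
`(u, v)` with `v - f (u - p) ∈ [c, c + ℓ]`. If `ω_f(x) < ℓ / 3`, then `f` stays within `ℓ / 3`
of `f x` near `x`, so a small open box sits inside this set. Conversely, an open box
`(q₁ - r, q₁ + r) × (q₂ - r, q₂ + r)` inside the set traps the values of `f` near `q₁ - p` in an
interval of length `ℓ - r`, so `ω_f(q₁ - p) < ℓ`. Hence a segment of length `ℓ` with empty
interior exists exactly when `ω_f ≥ ℓ` everywhere for some `ℓ > 0`.
-/

open Pointwise ENNReal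

/-- The oscillation of `f : ℝ → ℝ` at `x`, valued in `[0, ∞]`: the limit as `δ → 0⁺`
(equivalently, the infimum over `δ > 0`, by monotonicity in `δ`) of
`sup_{y ∈ [x-δ,x+δ]} f y - inf_{y ∈ [x-δ,x+δ]} f y`, i.e. of the diameter of
`f '' [x-δ, x+δ]`. -/
noncomputable def oscAt (f : ℝ → ℝ) (x : ℝ) : ℝ≥0∞ :=
  ⨅ (δ : ℝ) (_ : 0 < δ), EMetric.diam (f '' Set.Icc (x - δ) (x + δ))

open Set

section Oscillation

variable {f : ℝ → ℝ} {x : ℝ}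

theorem oscAt_le_ediam_of_mapsTo {δ : ℝ} {s : Set ℝ} (hδ : 0 < δ)
    (h : MapsTo f (Icc (x - δ) (x + δ)) s) : oscAt f x ≤ Metric.ediam s :=
  (iInf₂_le δ hδ).trans (Metric.ediam_mono h.image_subset)

theorem exists_forall_dist_lt_of_oscAt_lt {ε : ℝ} (h : oscAt f x < ENNReal.ofReal ε) :
    ∃ δ > 0, ∀ y ∈ Icc (x - δ) (x + δ), dist (f y) (f x) < ε := by
  obtain ⟨δ, hδ⟩ := iInf_lt_iff.mp h
  obtain ⟨hδ_pos, hdiam⟩ := iInf_lt_iff.mp hδ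
  have hx : x ∈ Icc (x - δ) (x + δ) := ⟨by linarith, by linarith⟩
  refine ⟨δ, hδ_pos, fun y hy => ?_⟩
  have hedist : edist (f y) (f x) < ENNReal.ofReal ε :=
    (Metric.edist_le_ediam_of_mem (mem_image_of_mem f hy) (mem_image_of_mem f hx)).trans_lt hdiam
  rw [edist_dist] at hedist
  exact (ENNReal.ofReal_lt_ofReal_iff_of_nonneg dist_nonneg).mp hedist

end Oscillation

section VerticalSegment

variable {f : ℝ → ℝ} {p c ℓ : ℝ}

theorem mem_graph_add_vertical_iff {I : Set ℝ} {u v : ℝ} :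
    (u, v) ∈ {q : ℝ × ℝ | ∃ x : ℝ, q = (x, f x)} + {p} ×ˢ I ↔ v - f (u - p) ∈ I := by
  constructor
  · rintro ⟨_, ⟨x, rfl⟩, ⟨p', t⟩, ⟨rfl, ht⟩, h⟩
    simp only [Prod.mk_add_mk, Prod.mk.injEq] at h
    obtain ⟨rfl, rfl⟩ := h
    simpa using ht
  · intro hv
    exact ⟨(u - p, f (u - p)), ⟨u - p, rfl⟩, (p, v - f (u - p)), ⟨rfl, hv⟩, by simp⟩

theorem interior_graph_add_vertical_segment_nonempty_of_oscAt_lt {x : ℝ}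
    (hx : oscAt f x < ENNReal.ofReal (ℓ / 3)) :
    (interior ({q : ℝ × ℝ | ∃ x : ℝ, q = (x, f x)} + {p} ×ˢ Icc c (c + ℓ))).Nonempty := by
  obtain ⟨δ, hδ, hclose⟩ := exists_forall_dist_lt_of_oscAt_lt hx
  have hℓ : 0 < ℓ := by
    by_contra! hℓ
    simp [ENNReal.ofReal_eq_zero.mpr (by linarith : ℓ / 3 ≤ 0)] at hx
  set box := Ioo (x - δ + p) (x + δ + p) ×ˢ Ioo (f x + c + ℓ / 3) (f x + c + 2 * ℓ / 3)
  have hbox : box ⊆ {q : ℝ × ℝ | ∃ x : ℝ, q = (x, f x)} + {p} ×ˢ Icc c (c + ℓ) := by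
    rintro ⟨u, v⟩ ⟨⟨hu₁, hu₂⟩, hv₁, hv₂⟩
    have hfu := abs_lt.mp (hclose (u - p) ⟨by linarith, by linarith⟩)
    exact mem_graph_add_vertical_iff.mpr ⟨by linarith [hfu.2], by linarith [hfu.1]⟩
  have hcenter : (x + p, f x + c + ℓ / 2) ∈ box :=
    ⟨⟨by linarith, by linarith⟩, by linarith, by linarith⟩
  exact ⟨_, interior_maximal hbox (isOpen_Ioo.prod isOpen_Ioo) hcenter⟩

theorem oscAt_lt_of_mem_interior_graph_add_vertical_segment {q : ℝ × ℝ}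
    (hq : q ∈ interior ({q : ℝ × ℝ | ∃ x : ℝ, q = (x, f x)} + {p} ×ˢ Icc c (c + ℓ))) :
    oscAt f (q.1 - p) < ENNReal.ofReal ℓ := by
  obtain ⟨r, hr, hball⟩ := Metric.mem_nhds_iff.mp (mem_interior_iff_mem_nhds.mp hq)
  rw [← ball_prod_same] at hball
  have hmem : ∀ u ∈ Metric.ball q.1 r, ∀ v ∈ Metric.ball q.2 r,
      v - f (u - p) ∈ Icc c (c + ℓ) := fun u hu v hv =>
    mem_graph_add_vertical_iff.mp (hball ⟨hu, hv⟩)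
  have hlow : q.2 - r / 2 ∈ Metric.ball q.2 r := by
    rw [Real.ball_eq_Ioo]; constructor <;> linarith
  have hhigh : q.2 + r / 2 ∈ Metric.ball q.2 r := by
    rw [Real.ball_eq_Ioo]; constructor <;> linarith
  have htrap : MapsTo f (Icc (q.1 - p - r / 2) (q.1 - p + r / 2))
      (Icc (q.2 + r / 2 - c - ℓ) (q.2 - r / 2 - c)) := by
    intro y ⟨hy₁, hy₂⟩
    have hu : y + p ∈ Metric.ball q.1 r := by
      rw [Real.ball_eq_Ioo]; constructor <;> linarith
    have h₁ := hmem _ hu _ hlow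
    have h₂ := hmem _ hu _ hhigh
    simp only [add_sub_cancel_right, mem_Icc] at h₁ h₂
    constructor <;> linarith
  calc oscAt f (q.1 - p)
      ≤ Metric.ediam (Icc (q.2 + r / 2 - c - ℓ) (q.2 - r / 2 - c)) :=
        oscAt_le_ediam_of_mapsTo (half_pos hr) htrap
    _ = ENNReal.ofReal (ℓ - r) := by rw [Real.ediam_Icc]; ring_nf
    _ < ENNReal.ofReal ℓ := by
        have : 0 < ℓ := by linarith [(hmem _ (Metric.mem_ball_self hr) _ hlow).1,
          (hmem _ (Metric.mem_ball_self hr) _ hhigh).2]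
        exact (ENNReal.ofReal_lt_ofReal_iff this).mpr (by linarith)

end VerticalSegment

/-- For `f : ℝ → ℝ` with graph `G_f`, there exists a vertical line segment `L` such that
`G_f + L` has empty interior if and only if `f` is uniformly oscillated, i.e.
`inf_x ω_f(x) > 0`. -/
theorem exists_vertical_segment_graph_add_empty_interior_iff_uniformly_oscillated
    (f : ℝ → ℝ) :
    (∃ (p c ℓ : ℝ), 0 < ℓ ∧
      interior ({q : ℝ × ℝ | ∃ x : ℝ, q = (x, f x)} + {p} ×ˢ Set.Icc c (c + ℓ)) = ∅) ↔
    0 < ⨅ x : ℝ, oscAt f x := by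
  constructor
  · rintro ⟨p, c, ℓ, hℓ, hempty⟩
    by_contra! hzero
    have hsmall : ⨅ x : ℝ, oscAt f x < ENNReal.ofReal (ℓ / 3) :=
      hzero.trans_lt (ENNReal.ofReal_pos.mpr (by linarith))
    obtain ⟨x, hx⟩ := iInf_lt_iff.mp hsmall
    exact (interior_graph_add_vertical_segment_nonempty_of_oscAt_lt hx).ne_empty hempty
  · intro hpos
    obtain ⟨ℓ, -, hℓ, hℓ_le⟩ := ENNReal.lt_iff_exists_real_btwn.mp hpos
    refine ⟨0, 0, ℓ, ENNReal.ofReal_pos.mp hℓ, eq_empty_of_forall_notMem fun q hq => ?_⟩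
    have hlt := oscAt_lt_of_mem_interior_graph_add_vertical_segment hq
    exact hlt.not_ge (hℓ_le.le.trans (iInf_le _ _))
end

section
/- Let $f : \mathbb{R} \to \mathbb{R}$ be a function with $\inf_{x \in \mathbb{R}} \omega_f(x) > 0$, where $\omega_f(x)$ is the oscillation of $f$ at $x$. Let $L = \{p\} \times [c, c+\ell]$ be a vertical line segment whose length $\ell$ satisfies $0 < \ell < \inf_{x \in \mathbb{R}} \omega_f(x)$. Then $G_f + L$ has empty interior, where $G_f = \{(x, f(x)) : x \in \mathbb{R}\}$ is the graph of $f$. -/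
open Pointwise ENNReal

/-- If `f : ℝ → ℝ` is uniformly oscillated and `L` is a vertical line segment whose
length `ℓ` satisfies `0 < ℓ < inf_x ω_f(x)`, then `G_f + L` has empty interior. -/
theorem graph_add_short_vertical_segment_empty_interior
    (f : ℝ → ℝ) (h : 0 < ⨅ x : ℝ, oscAt f x)
    (p c ℓ : ℝ) (hℓ : 0 < ℓ) (hℓ' : ENNReal.ofReal ℓ < ⨅ x : ℝ, oscAt f x) :
    interior ({q : ℝ × ℝ | ∃ x : ℝ, q = (x, f x)} + {p} ×ˢ Set.Icc c (c + ℓ)) = ∅ := by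
  rw [Set.eq_empty_iff_forall_notMem]
  intro q hq
  rw [mem_interior_iff_mem_nhds, Metric.mem_nhds_iff] at hq
  obtain ⟨ε, hε, hball⟩ := hq
  have hmem : ∀ s y : ℝ, dist s q.1 < ε → dist y q.2 < ε →
      c ≤ y - f (s - p) ∧ y - f (s - p) ≤ c + ℓ := by
    intro s y hs hy
    have hsy : (s, y) ∈ ({q : ℝ × ℝ | ∃ x : ℝ, q = (x, f x)} + {p} ×ˢ Set.Icc c (c + ℓ)) := by
      apply hball
      rw [Metric.mem_ball, Prod.dist_eq]
      exact max_lt hs hy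
    obtain ⟨a, ha, b, hb, hab⟩ := hsy
    obtain ⟨x, hx⟩ := ha
    obtain ⟨hb1, hb2⟩ := hb
    subst hx
    have hb1' : b.1 = p := hb1
    have h1 : x + b.1 = s := congrArg Prod.fst hab
    have h2 : f x + b.2 = y := congrArg Prod.snd hab
    have hxs : x = s - p := by rw [hb1'] at h1; linarith
    subst hxs
    rw [Set.mem_Icc] at hb2
    constructor <;> linarith [hb2.1, hb2.2]
  have hpin : ∀ s : ℝ, dist s q.1 < ε →
      f (s - p) ∈ Set.Icc (q.2 + ε/2 - c - ℓ) (q.2 - ε/2 - c) := by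
    intro s hs
    have h1 := hmem s (q.2 - ε/2) hs (by rw [Real.dist_eq, abs_lt]; constructor <;> linarith)
    have h2 := hmem s (q.2 + ε/2) hs (by rw [Real.dist_eq, abs_lt]; constructor <;> linarith)
    exact ⟨by linarith [h2.2], by linarith [h1.1]⟩
  have hsub : f '' Set.Icc (q.1 - p - ε/2) (q.1 - p + ε/2) ⊆
      Set.Icc (q.2 + ε/2 - c - ℓ) (q.2 - ε/2 - c) := by
    rintro _ ⟨x, hx, rfl⟩
    rw [Set.mem_Icc] at hx
    have hs : dist (x + p) q.1 < ε := by
      rw [Real.dist_eq, abs_lt]; constructor <;> linarith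
    have := hpin (x + p) hs
    rwa [add_sub_cancel_right] at this
  have hd : EMetric.diam (f '' Set.Icc (q.1 - p - ε/2) (q.1 - p + ε/2)) ≤ ENNReal.ofReal ℓ := by
    calc EMetric.diam (f '' Set.Icc (q.1 - p - ε/2) (q.1 - p + ε/2))
        ≤ EMetric.diam (Set.Icc (q.2 + ε/2 - c - ℓ) (q.2 - ε/2 - c)) := EMetric.diam_mono hsub
      _ = ENNReal.ofReal ((q.2 - ε/2 - c) - (q.2 + ε/2 - c - ℓ)) := Real.ediam_Icc _ _
      _ ≤ ENNReal.ofReal ℓ := ENNReal.ofReal_le_ofReal (by linarith)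
  have hosc : oscAt f (q.1 - p) ≤ ENNReal.ofReal ℓ :=
    le_trans (iInf₂_le (ε/2) (by linarith)) hd
  exact absurd (lt_of_lt_of_le hℓ' (le_trans (iInf_le _ (q.1 - p)) hosc)) (lt_irrefl _)
end

section
/- Let $F$ be a compact connected subset of $\mathbb{R}^2$ with empty interior such that $F$ is not contained in any affine line, and suppose that $F^c = \mathbb{R}^2 \setminus F$ has no bounded connected components (i.e., $F^c$ is connected). Then the boundary of the convex hull of $F$ is not contained in $F$: $\partial(\mathrm{conv}(F)) \not\subset F$. -/
/-!
A set not contained in any line spans the plane, so its convex hull has nonempty interior, which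
a set with empty interior cannot fill. If `∂ (conv F) ⊆ F`, the component of `Fᶜ` through a point
of `int (conv F) \ F` can never cross `∂ (conv F)`, so it stays inside the bounded set `conv F`.
-/

open Set

theorem exists_linearMap_ne_zero_eq_const_of_affineSpan_ne_top {K V : Type*} [Field K]
    [AddCommGroup V] [Module K V] [Nontrivial V] {s : Set V} (hs : affineSpan K s ≠ ⊤) :
    ∃ (φ : V →ₗ[K] K) (c : K), φ ≠ 0 ∧ ∀ x ∈ s, φ x = c := by
  rcases s.eq_empty_or_nonempty with rfl | ⟨p, hp⟩
  · obtain ⟨φ, hφ⟩ := exists_ne (0 : V →ₗ[K] K)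
    exact ⟨φ, 0, hφ, by simp⟩
  have hlt : vectorSpan K s < ⊤ := by
    rwa [lt_top_iff_ne_top, ne_eq,
      ← AffineSubspace.affineSpan_eq_top_iff_vectorSpan_eq_top_of_nonempty K V V ⟨p, hp⟩]
  obtain ⟨φ, hφ, hker⟩ := (vectorSpan K s).exists_le_ker_of_lt_top hlt
  refine ⟨φ, φ p, hφ, fun x hx => ?_⟩
  have : φ (x - p) = 0 := hker (vsub_mem_vectorSpan K hx hp)
  rwa [map_sub, sub_eq_zero] at this

theorem connectedComponentIn_compl_subset_interior {X : Type*} [TopologicalSpace X]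
    {A F : Set X} (hA : frontier A ⊆ F) {x : X} (hxA : x ∈ interior A) (hxF : x ∉ F) :
    connectedComponentIn Fᶜ x ⊆ interior A := by
  refine isPreconnected_connectedComponentIn.subset_of_closure_inter_subset isOpen_interior
    ⟨x, mem_connectedComponentIn hxF, hxA⟩ fun y ⟨hy, hyC⟩ => ?_
  rw [← closure_sdiff_frontier]
  exact ⟨closure_mono interior_subset hy, fun hyA => connectedComponentIn_subset _ _ hyC (hA hyA)⟩

theorem frontier_convexHull_not_subset_general
    (F : Set (EuclideanSpace ℝ (Fin 2)))
    (hFcpt : IsCompact F) (hFint : interior F = ∅)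
    (hFline : ¬ ∃ (φ : EuclideanSpace ℝ (Fin 2) →ₗ[ℝ] ℝ) (c : ℝ),
      φ ≠ 0 ∧ ∀ x ∈ F, φ x = c)
    (hnb : ∀ x ∈ Fᶜ, ¬ Bornology.IsBounded (connectedComponentIn Fᶜ x)) :
    ¬ frontier (convexHull ℝ F) ⊆ F := by
  intro hsub
  have hspan : affineSpan ℝ F = ⊤ :=
    not_not.mp fun h => hFline (exists_linearMap_ne_zero_eq_const_of_affineSpan_ne_top h)
  have hint : (interior (convexHull ℝ F)).Nonempty :=
    interior_convexHull_nonempty_iff_affineSpan_eq_top.mpr hspan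
  obtain ⟨x, hxA, hxF⟩ : ∃ x ∈ interior (convexHull ℝ F), x ∉ F := by
    refine not_subset.mp fun h => hint.ne_empty ?_
    rw [← subset_empty_iff, ← hFint]
    exact interior_maximal h isOpen_interior
  refine hnb x hxF ((isBounded_convexHull.mpr hFcpt.isBounded).subset ?_)
  exact (connectedComponentIn_compl_subset_interior hsub hxA hxF).trans interior_subset

/-- Let `F` be a compact connected subset of `ℝ²` with empty interior, not contained in
any affine line, and suppose `Fᶜ` has no bounded connected components. Then the boundary
of the convex hull of `F` is not contained in `F`. -/
theorem frontier_convexHull_not_subset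
    (F : Set (EuclideanSpace ℝ (Fin 2)))
    (hFcpt : IsCompact F) (hFconn : IsConnected F) (hFint : interior F = ∅)
    (hFline : ¬ ∃ (φ : EuclideanSpace ℝ (Fin 2) →ₗ[ℝ] ℝ) (c : ℝ),
      φ ≠ 0 ∧ ∀ x ∈ F, φ x = c)
    (hnb : ∀ x ∈ Fᶜ, ¬ Bornology.IsBounded (connectedComponentIn Fᶜ x)) :
    ¬ frontier (convexHull ℝ F) ⊆ F :=
  frontier_convexHull_not_subset_general F hFcpt hFint hFline hnb
end

section
/- Let $f : \mathbb{R} \to \mathbb{R}$ be a function that is continuous at some point $x_0 \in \mathbb{R}$. Then for every vertical line segment $L = \{p\} \times [c, c+\ell]$ with $\ell > 0$, the set $G_f + L$ has non-empty interior, where $G_f = \{(x, f(x)) : x \in \mathbb{R}\}$ is the graph of $f$ and $G_f + L = \{a + b : a \in G_f, b \in L\}$. -/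
open Pointwise

/-- If `f : ℝ → ℝ` is continuous at some point `x₀`, then for every vertical line
segment `L = {p} × [c, c+ℓ]` with `ℓ > 0`, the set `G_f + L` has non-empty interior. -/
theorem graph_continuousAt_add_vertical_segment_nonempty_interior
    (f : ℝ → ℝ) (x₀ : ℝ) (hf : ContinuousAt f x₀)
    (p c ℓ : ℝ) (hℓ : 0 < ℓ) :
    (interior ({q : ℝ × ℝ | ∃ x : ℝ, q = (x, f x)} + {p} ×ˢ Set.Icc c (c + ℓ))).Nonempty := by
  obtain ⟨δ, hδ, hball⟩ := Metric.continuousAt_iff.mp hf (ℓ/4) (by linarith)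
  set S : Set (ℝ × ℝ) :=
    Set.Ioo (x₀+p-δ) (x₀+p+δ) ×ˢ Set.Ioo (f x₀ + c + ℓ/4) (f x₀ + c + 3*ℓ/4) with hS
  have hopen : IsOpen S := isOpen_Ioo.prod isOpen_Ioo
  have hsub : S ⊆ ({q : ℝ × ℝ | ∃ x : ℝ, q = (x, f x)} + {p} ×ˢ Set.Icc c (c + ℓ)) := by
    rintro ⟨u, v⟩ ⟨hu, hv⟩
    simp only [Set.mem_Ioo] at hu hv
    have hd : dist (u - p) x₀ < δ := by
      rw [Real.dist_eq, abs_lt]; constructor <;> linarith [hu.1, hu.2]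
    have hfb := hball hd
    rw [Real.dist_eq, abs_lt] at hfb
    refine ⟨(u - p, f (u - p)), ⟨u - p, rfl⟩, (p, v - f (u - p)), ⟨rfl, ?_, ?_⟩, ?_⟩
    · dsimp; linarith [hfb.1, hfb.2, hv.1, hv.2]
    · dsimp; linarith [hfb.1, hfb.2, hv.1, hv.2]
    · ext <;> simp
  refine ⟨(x₀ + p, f x₀ + c + ℓ/2), interior_maximal hsub hopen ?_⟩
  constructor <;> constructor <;> dsimp <;> linarith
end
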